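/- Let N ≥ 2, let Ω be a convex bounded domain in ℝ^d, and let u_1,…,u_{N−1} be bounded vector fields from Ω to ℝ^d whose (N−1)-tuple is jointly N-monotone. Then there exists a continuous N-antisymmetric Hamiltonian H̄ on Ω^N such that for every x ∈ Ω, L_{H̄}(x, u_1(x), u_2(x), …, u_{N−1}(x)) = ∑_{i=1}^{N−1} ⟨u_i(x), x⟩, where L_{H̄}(x,p_1,…,p_{N−1}) = sup{ ∑_{i=1}^{N−1} ⟨p_i, y_i⟩ − H̄(x,y_1,…,y_{N−1}) : y_1,…,y_{N−1} ∈ Ω }. -/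

import Mathlib

open MeasureTheory Finset
open scoped BigOperators RealInnerProductSpace

noncomputable section

/-- `ℝ^d` as a Euclidean space. -/
abbrev Ed (d : ℕ) := EuclideanSpace ℝ (Fin d)

/-- The cyclic permutation `σ(x₁,…,x_N) = (x₂,…,x_N,x₁)` acting on tuples. -/
def cyc {N : ℕ} {α : Type*} (x : Fin N → α) : Fin N → α := x ∘ finRotate N

/-- The `(N-1)`-tuple `(u 1, …, u (N-1))` is jointly `N`-monotone on `Ω`:
for every cycle `x 1, …, x (2N-1)` of points of `Ω` with `x (N+i) = x i` for
`1 ≤ i ≤ N-1`, one has `∑_{i=1}^{N} ∑_{ℓ=1}^{N-1} ⟨u ℓ (x i), x i - x (i+ℓ)⟩ ≥ 0`. -/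
def JointlyNMonotone (N : ℕ) {d : ℕ} (Ω : Set (Ed d)) (u : ℕ → Ed d → Ed d) : Prop :=
  ∀ x : ℕ → Ed d,
    (∀ i, 1 ≤ i → i ≤ 2 * N - 1 → x i ∈ Ω) →
    (∀ i, 1 ≤ i → i ≤ N - 1 → x (N + i) = x i) →
    0 ≤ ∑ i ∈ Icc 1 N, ∑ ℓ ∈ Icc 1 (N - 1), ⟪u ℓ (x i), x i - x (i + ℓ)⟫

/-- `H` is `N`-sub-antisymmetric on `Ω^N` : `∑_{i=0}^{N-1} H(σ^i x) ≤ 0` on `Ω^N`. -/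
def NSubAntisymmetric (N : ℕ) {d : ℕ} (Ω : Set (Ed d)) (H : (Fin N → Ed d) → ℝ) : Prop :=
  ∀ x : Fin N → Ed d, (∀ i, x i ∈ Ω) → ∑ i ∈ range N, H (cyc^[i] x) ≤ 0

/-- `H` is `N`-antisymmetric on `Ω^N` : `∑_{i=0}^{N-1} H(σ^i x) = 0` on `Ω^N`. -/
def NAntisymmetric (N : ℕ) {d : ℕ} (Ω : Set (Ed d)) (H : (Fin N → Ed d) → ℝ) : Prop :=
  ∀ x : Fin N → Ed d, (∀ i, x i ∈ Ω) → ∑ i ∈ range N, H (cyc^[i] x) = 0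

/-- `u` is `N`-cyclically monotone on `Ω`: for every cycle `x 1, …, x N, x (N+1) = x 1`
of points of `Ω`, `∑_{i=1}^{N} ⟨u (x i), x i - x (i+1)⟩ ≥ 0`. -/
def NCyclicallyMonotone (N : ℕ) {d : ℕ} (Ω : Set (Ed d)) (u : Ed d → Ed d) : Prop :=
  ∀ x : ℕ → Ed d,
    (∀ i, 1 ≤ i → i ≤ N → x i ∈ Ω) → x (N + 1) = x 1 →
    0 ≤ ∑ i ∈ Icc 1 N, ⟪u (x i), x i - x (i + 1)⟫

open Fin.NatCast in
/-- The partial Legendre transform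
`L_H(x, p₁,…,p_{N-1}) = sup { ∑_{i=1}^{N-1} ⟨pᵢ, yᵢ⟩ - H(x, y₁,…,y_{N-1}) : yᵢ ∈ Ω }`. -/
def legendreL (N : ℕ) {d : ℕ} [NeZero N] (Ω : Set (Ed d)) (H : (Fin N → Ed d) → ℝ)
    (x : Ed d) (p : ℕ → Ed d) : ℝ :=
  sSup {r : ℝ | ∃ y : Fin N → Ed d, (∀ i, y i ∈ Ω) ∧
    r = ∑ ℓ ∈ Icc 1 (N - 1), ⟪p ℓ, y (ℓ : Fin N)⟫ - H (Function.update y 0 x)}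


/-!
Let `C` bound the `u ℓ` and put
`H̃(z) = sup_{w ∈ Ω} (∑_ℓ ⟪u ℓ w, z ℓ - z 0⟫ - 2 (N - 1) C ‖w - z 0‖)`.
Each term is Lipschitz in `z` uniformly in `w`, so `H̃` is continuous. Evaluating the cyclic
shifts of `z` at near-maximisers `w i`, the sum of the pairings is the joint monotonicity sum of
the `w i` (which is `≤ 0`) plus errors bounded by `2 (N - 1) C ∑ ‖z i - w i‖`, which the penalty
absorbs; hence `∑_i H̃(σ^i z) ≤ 0`. The antisymmetrization `H̄ = H̃ - (cyclic average of H̃)` is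
then `≥ H̃`, and choosing `w = x` gives `H̄(x, y) ≥ ∑_ℓ ⟪u ℓ x, y ℓ - x⟫`. So the supremum
defining `L_H̄(x, u(x))` is at most `∑_ℓ ⟪u ℓ x, x⟫`, and it is attained on the diagonal, where
`H̄` vanishes.
-/

open Fin.NatCast

section Cyclic

variable {α : Type*} {N : ℕ} [NeZero N]

lemma sum_Icc_one_eq_sum_fin {M : Type*} [AddCommMonoid M] (f : Fin N → M) :
    ∑ i ∈ Icc 1 N, f i = ∑ i : Fin N, f i := by
  rw [← Finset.Ico_add_one_right_eq_Icc, sum_Ico_eq_sum_range, Nat.add_sub_cancel,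
    ← Fin.sum_univ_eq_sum_range (fun k => f ((1 + k : ℕ) : Fin N))]
  simp only [Nat.cast_add, Nat.cast_one, Fin.cast_val_eq_self]
  exact Equiv.sum_comp (Equiv.addLeft 1) f

lemma cyc_iterate_apply (x : Fin N → α) (i : ℕ) (j : Fin N) : cyc^[i] x j = x (j + i) := by
  induction i generalizing x with
  | zero => simp
  | succ i ih =>
    rw [Function.iterate_succ_apply, ih, cyc, Function.comp_apply, finRotate_apply]
    push_cast
    rw [add_assoc]

lemma sum_range_cyc_iterate (G : (Fin N → α) → ℝ) (x : Fin N → α) :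
    ∑ i ∈ range N, G (cyc^[i] x) = ∑ i : Fin N, G (fun j => x (j + i)) := by
  rw [← Fin.sum_univ_eq_sum_range]
  simp only [funext (cyc_iterate_apply x _), Fin.cast_val_eq_self]

omit [NeZero N] in
lemma continuous_cyc [TopologicalSpace α] : Continuous (cyc : (Fin N → α) → Fin N → α) :=
  continuous_pi fun _ => continuous_apply _

def cycAverage (G : (Fin N → α) → ℝ) (x : Fin N → α) : ℝ :=
  (N : ℝ)⁻¹ * ∑ i ∈ range N, G (cyc^[i] x)

def antisymmetrize (G : (Fin N → α) → ℝ) (x : Fin N → α) : ℝ :=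
  G x - cycAverage G x

lemma cycAverage_cyc_iterate (G : (Fin N → α) → ℝ) (x : Fin N → α) (k : ℕ) :
    cycAverage G (cyc^[k] x) = cycAverage G x := by
  simp only [cycAverage, sum_range_cyc_iterate, cyc_iterate_apply, add_assoc]
  exact congrArg _ (Equiv.sum_comp (Equiv.addRight (k : Fin N)) fun i => G fun j => x (j + i))

lemma nAntisymmetric_antisymmetrize {d : ℕ} (Ω : Set (Ed d)) (G : (Fin N → Ed d) → ℝ) :
    NAntisymmetric N Ω (antisymmetrize G) := by
  intro x _
  simp only [antisymmetrize, sum_sub_distrib, cycAverage_cyc_iterate, sum_const, card_range,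
    nsmul_eq_mul]
  rw [cycAverage, mul_inv_cancel_left₀ (Nat.cast_ne_zero.2 (NeZero.ne N)), sub_self]

lemma antisymmetrize_const (G : (Fin N → α) → ℝ) (a : α) :
    antisymmetrize G (fun _ => a) = 0 := by
  have hfix (i : ℕ) : cyc^[i] (fun _ : Fin N => a) = fun _ => a :=
    Function.iterate_fixed rfl i
  simp only [antisymmetrize, cycAverage, hfix, sum_const, card_range, nsmul_eq_mul]
  rw [inv_mul_cancel_left₀ (Nat.cast_ne_zero.2 (NeZero.ne N)), sub_self]

omit [NeZero N] in
lemma Continuous.antisymmetrize [TopologicalSpace α] {G : (Fin N → α) → ℝ} (hG : Continuous G) :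
    Continuous (antisymmetrize G) :=
  hG.sub <| continuous_const.mul <| continuous_finsetSum _ fun i _ =>
    hG.comp (continuous_cyc.iterate i)

end Cyclic

lemma sum_csSup_image_nonpos {ι α : Type*} [Fintype ι] {f : ι → α → ℝ} {s : Set α}
    (hs : s.Nonempty) (h : ∀ w : ι → α, (∀ i, w i ∈ s) → ∑ i, f i (w i) ≤ 0) :
    ∑ i, sSup (f i '' s) ≤ 0 := by
  refine le_of_forall_pos_le_add fun ε hε => ?_
  set δ := ε / (Fintype.card ι + 1)
  have hδ : 0 < δ := by positivity
  have hcardδ : Fintype.card ι * δ ≤ ε := by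
    rw [mul_div_assoc', div_le_iff₀ (by positivity)]
    nlinarith
  have hnear (i : ι) : ∃ w ∈ s, sSup (f i '' s) - δ < f i w := by
    obtain ⟨_, ⟨w, hw, rfl⟩, hlt⟩ :=
      exists_lt_of_lt_csSup (hs.image (f i)) (sub_lt_self _ hδ)
    exact ⟨w, hw, hlt⟩
  choose w hws hw using hnear
  calc ∑ i, sSup (f i '' s) ≤ ∑ i, (f i (w i) + δ) := sum_le_sum fun i _ => by linarith [hw i]
    _ = ∑ i, f i (w i) + Fintype.card ι * δ := by
      rw [sum_add_distrib, sum_const, card_univ, nsmul_eq_mul]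
    _ ≤ 0 + ε := add_le_add (h w hws) hcardδ

lemma Finset.exists_nonneg_forall_le_of_forall_exists_le {ι α : Type*} {s : Finset ι}
    {t : Set α} {f : ι → α → ℝ} (h : ∀ i ∈ s, ∃ C : ℝ, ∀ x ∈ t, f i x ≤ C) : ∃ C, 0 ≤ C ∧ ∀ i ∈ s, ∀ x ∈ t, f i x ≤ C := by
  choose! c hc using h
  refine ⟨∑ i ∈ s, max (c i) 0, sum_nonneg fun i _ => le_max_right _ _, fun i hi x hx => ?_⟩
  exact (hc i hi x hx).trans <|
    (le_max_left _ _).trans (single_le_sum (fun j _ => le_max_right (c j) 0) hi)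

section PenalizedPairing

variable {E : Type*} [NormedAddCommGroup E] [InnerProductSpace ℝ E] {N : ℕ} [NeZero N]
  {u : ℕ → E → E} {C : ℝ} {Ω : Set E}

lemma real_inner_le_mul_norm_of_norm_le {v : E} (a : E) (hv : ‖v‖ ≤ C) : ⟪v, a⟫ ≤ C * ‖a‖ :=
  (real_inner_le_norm v a).trans (mul_le_mul_of_nonneg_right hv (norm_nonneg a))

def penalizedPairing (u : ℕ → E → E) (C : ℝ) (z : Fin N → E) (w : E) : ℝ :=
  ∑ ℓ ∈ Icc 1 (N - 1), ⟪u ℓ w, z ℓ - z 0⟫ - 2 * (N - 1 : ℕ) * C * ‖w - z 0‖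

def supPenalizedPairing (u : ℕ → E → E) (C : ℝ) (Ω : Set E) (z : Fin N → E) : ℝ :=
  sSup (penalizedPairing u C z '' Ω)

lemma bddAbove_penalizedPairing_image (hC : ∀ ℓ ∈ Icc 1 (N - 1), ∀ w ∈ Ω, ‖u ℓ w‖ ≤ C)
    (hC0 : 0 ≤ C) (z : Fin N → E) : BddAbove (penalizedPairing u C z '' Ω) := by
  refine ⟨∑ ℓ ∈ Icc 1 (N - 1), C * ‖z ℓ - z 0‖, ?_⟩
  rintro _ ⟨w, hw, rfl⟩
  have hpen : 0 ≤ 2 * ((N - 1 : ℕ) : ℝ) * C * ‖w - z 0‖ := by positivity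
  have hsum := sum_le_sum fun (ℓ : ℕ) hℓ =>
    real_inner_le_mul_norm_of_norm_le (z ℓ - z 0) (hC ℓ hℓ w hw)
  rw [penalizedPairing]
  linarith

lemma penalizedPairing_le_add_mul_norm_sub (hC : ∀ ℓ ∈ Icc 1 (N - 1), ∀ w ∈ Ω, ‖u ℓ w‖ ≤ C)
    (hC0 : 0 ≤ C) {w : E} (hw : w ∈ Ω) (z z' : Fin N → E) :
    penalizedPairing u C z w ≤ penalizedPairing u C z' w + 4 * (N - 1 : ℕ) * C * ‖z - z'‖ := by
  have hcoord (i : Fin N) : ‖z i - z' i‖ ≤ ‖z - z'‖ := norm_le_pi_norm (z - z') i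
  have hinner (ℓ : ℕ) (hℓ : ℓ ∈ Icc 1 (N - 1)) :
      ⟪u ℓ w, z ℓ - z 0⟫ ≤ ⟪u ℓ w, z' ℓ - z' 0⟫ + 2 * C * ‖z - z'‖ := by
    have hsplit : z ℓ - z 0 = (z' ℓ - z' 0) + ((z ℓ - z' ℓ) - (z 0 - z' 0)) := by abel
    have hnorm : ‖(z ℓ - z' ℓ) - (z 0 - z' 0)‖ ≤ 2 * ‖z - z'‖ :=
      (norm_sub_le _ _).trans (by linarith [hcoord ℓ, hcoord 0])
    have hdiff := real_inner_le_mul_norm_of_norm_le ((z ℓ - z' ℓ) - (z 0 - z' 0)) (hC ℓ hℓ w hw)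
    rw [hsplit, inner_add_right]
    linarith [mul_le_mul_of_nonneg_left hnorm hC0]
  have hpen : ‖w - z' 0‖ ≤ ‖w - z 0‖ + ‖z - z'‖ := by
    calc ‖w - z' 0‖ ≤ ‖w - z 0‖ + ‖z 0 - z' 0‖ := norm_sub_le_norm_sub_add_norm_sub _ _ _
      _ ≤ ‖w - z 0‖ + ‖z - z'‖ := by gcongr; exact hcoord 0
  have hsum := sum_le_sum hinner
  rw [sum_add_distrib, sum_const, Nat.card_Icc, Nat.add_sub_cancel, nsmul_eq_mul] at hsum
  have hpen' := mul_le_mul_of_nonneg_left hpen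
    (by positivity : (0 : ℝ) ≤ 2 * ((N - 1 : ℕ) : ℝ) * C)
  simp only [penalizedPairing]
  linarith

lemma continuous_supPenalizedPairing (hC : ∀ ℓ ∈ Icc 1 (N - 1), ∀ w ∈ Ω, ‖u ℓ w‖ ≤ C)
    (hC0 : 0 ≤ C) (hΩ : Ω.Nonempty) :
    Continuous (supPenalizedPairing u C Ω : (Fin N → E) → ℝ) := by
  refine (LipschitzWith.of_le_add_mul' (4 * (N - 1 : ℕ) * C) fun z z' => ?_).continuous
  refine csSup_le (hΩ.image _) ?_
  rintro _ ⟨w, hw, rfl⟩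
  rw [dist_eq_norm]
  exact (penalizedPairing_le_add_mul_norm_sub hC hC0 hw z z').trans <|
    add_le_add_left (le_csSup (bddAbove_penalizedPairing_image hC hC0 z') ⟨w, hw, rfl⟩) _

end PenalizedPairing

section JointMonotone

variable {d N : ℕ} [NeZero N] {Ω : Set (Ed d)} {u : ℕ → Ed d → Ed d} {C : ℝ}

lemma JointlyNMonotone.sum_fin_nonneg (hmono : JointlyNMonotone N Ω u) {w : Fin N → Ed d}
    (hw : ∀ i, w i ∈ Ω) :
    0 ≤ ∑ i : Fin N, ∑ ℓ ∈ Icc 1 (N - 1), ⟪u ℓ (w i), w i - w (i + ℓ)⟫ := by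
  have h := hmono (fun n => w n) (fun _ _ _ => hw _) fun i _ _ => by
    simp only [Nat.cast_add, Fin.natCast_self, zero_add]
  simp only [Nat.cast_add] at h
  rwa [sum_Icc_one_eq_sum_fin (fun i => ∑ ℓ ∈ Icc 1 (N - 1), ⟪u ℓ (w i), w i - w (i + ℓ)⟫)] at h

lemma JointlyNMonotone.sum_penalizedPairing_nonpos (hmono : JointlyNMonotone N Ω u)
    (hC : ∀ ℓ ∈ Icc 1 (N - 1), ∀ w ∈ Ω, ‖u ℓ w‖ ≤ C) {z w : Fin N → Ed d}
    (hw : ∀ i, w i ∈ Ω) :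
    ∑ i : Fin N, penalizedPairing u C (fun j => z (j + i)) (w i) ≤ 0 := by
  set e : Fin N → ℝ := fun i => ‖z i - w i‖
  set A : Fin N → ℝ := fun i => ∑ ℓ ∈ Icc 1 (N - 1), ⟪u ℓ (w i), w (i + ℓ) - w i⟫
  set B : Fin N → ℝ := fun i => ∑ ℓ ∈ Icc 1 (N - 1), C * e (i + ℓ)
  have hterm (i : Fin N) :
      penalizedPairing u C (fun j => z (j + i)) (w i) ≤ A i + B i - (N - 1 : ℕ) * C * e i := by
    have hinner (ℓ : ℕ) (hℓ : ℓ ∈ Icc 1 (N - 1)) :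
        ⟪u ℓ (w i), z (ℓ + i) - z i⟫ ≤ ⟪u ℓ (w i), w (i + ℓ) - w i⟫ + C * e (i + ℓ) + C * e i := by
      have hsplit : z (ℓ + i) - z i
          = (w (i + ℓ) - w i) + (z (i + ℓ) - w (i + ℓ)) + -(z i - w i) := by
        rw [add_comm (ℓ : Fin N) i]; abel
      rw [hsplit, inner_add_right, inner_add_right]
      have h₁ := real_inner_le_mul_norm_of_norm_le (z (i + ℓ) - w (i + ℓ)) (hC ℓ hℓ _ (hw i))
      have h₂ := real_inner_le_mul_norm_of_norm_le (-(z i - w i)) (hC ℓ hℓ _ (hw i))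
      rw [norm_neg] at h₂
      linarith
    have hsum := sum_le_sum hinner
    rw [sum_add_distrib, sum_add_distrib, sum_const, Nat.card_Icc, Nat.add_sub_cancel,
      nsmul_eq_mul] at hsum
    simp only [penalizedPairing, zero_add, norm_sub_rev (w i)]
    linarith
  have hA : ∑ i, A i ≤ 0 := by
    simpa only [A, inner_sub_right, sum_sub_distrib, sub_nonneg, sub_nonpos] using
      hmono.sum_fin_nonneg hw
  have hB : ∑ i, B i = (N - 1 : ℕ) * C * ∑ i, e i := by
    have hshift (ℓ : ℕ) : ∑ i, C * e (i + ℓ) = C * ∑ i, e i := by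
      rw [← mul_sum]
      exact congrArg _ (Equiv.sum_comp (Equiv.addRight (ℓ : Fin N)) e)
    simp only [B]
    rw [sum_comm, sum_congr rfl fun ℓ _ => hshift ℓ, sum_const, Nat.card_Icc, Nat.add_sub_cancel,
      nsmul_eq_mul, mul_assoc]
  calc ∑ i, penalizedPairing u C (fun j => z (j + i)) (w i)
      ≤ ∑ i, (A i + B i - (N - 1 : ℕ) * C * e i) := sum_le_sum fun i _ => hterm i
    _ = ∑ i, A i := by rw [sum_sub_distrib, sum_add_distrib, hB, ← mul_sum]; ring
    _ ≤ 0 := hA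

lemma JointlyNMonotone.nSubAntisymmetric_supPenalizedPairing (hmono : JointlyNMonotone N Ω u)
    (hC : ∀ ℓ ∈ Icc 1 (N - 1), ∀ w ∈ Ω, ‖u ℓ w‖ ≤ C) :
    NSubAntisymmetric N Ω (supPenalizedPairing u C Ω) := fun z hz => by
  rw [sum_range_cyc_iterate]
  exact sum_csSup_image_nonpos ⟨z 0, hz 0⟩ fun w hw => hmono.sum_penalizedPairing_nonpos hC hw

lemma JointlyNMonotone.legendreL_antisymmetrize_supPenalizedPairing
    (hmono : JointlyNMonotone N Ω u) (hC : ∀ ℓ ∈ Icc 1 (N - 1), ∀ w ∈ Ω, ‖u ℓ w‖ ≤ C)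
    (hC0 : 0 ≤ C) {x : Ed d} (hx : x ∈ Ω) :
    legendreL N Ω (antisymmetrize (supPenalizedPairing u C Ω)) x (fun ℓ => u ℓ x) =
      ∑ ℓ ∈ Icc 1 (N - 1), ⟪u ℓ x, x⟫ := by
  set G : (Fin N → Ed d) → ℝ := supPenalizedPairing u C Ω
  refine IsGreatest.csSup_eq ⟨⟨fun _ => x, fun _ => hx, ?_⟩, ?_⟩
  · rw [Function.update_eq_self, antisymmetrize_const, sub_zero]
  rintro _ ⟨y, hy, rfl⟩
  set z := Function.update y 0 x
  have hz : ∀ i, z i ∈ Ω := Function.forall_update_iff y (p := fun _ v => v ∈ Ω) |>.2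
    ⟨hx, fun i _ => hy i⟩
  have hzy (ℓ : ℕ) (hℓ : ℓ ∈ Icc 1 (N - 1)) : z ℓ = y ℓ := by
    have hℓ := mem_Icc.1 hℓ
    refine Function.update_of_ne ?_ _ _
    rw [Ne, Fin.natCast_eq_zero]
    exact Nat.not_dvd_of_pos_of_lt hℓ.1 (by omega)
  have hA : cycAverage G z ≤ 0 :=
    mul_nonpos_of_nonneg_of_nonpos (by positivity)
      (hmono.nSubAntisymmetric_supPenalizedPairing hC z hz)
  have hG : penalizedPairing u C z x ≤ G z :=
    le_csSup (bddAbove_penalizedPairing_image hC hC0 z) ⟨x, hx, rfl⟩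
  have hpair : penalizedPairing u C z x =
      ∑ ℓ ∈ Icc 1 (N - 1), ⟪u ℓ x, y ℓ⟫ - ∑ ℓ ∈ Icc 1 (N - 1), ⟪u ℓ x, x⟫ := by
    simp only [penalizedPairing, z, Function.update_self, sub_self, norm_zero, mul_zero, sub_zero,
      inner_sub_right, sum_sub_distrib]
    rw [sum_congr rfl fun ℓ hℓ => congrArg _ (hzy ℓ hℓ)]
  simp only [antisymmetrize]
  linarith

end JointMonotone

theorem statement2_general {d : ℕ} (N : ℕ) [NeZero N]
    (Ω : Set (Ed d)) (hΩne : Ω.Nonempty)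
    (u : ℕ → Ed d → Ed d)
    (hubdd : ∀ ℓ ∈ Icc 1 (N - 1), ∃ C : ℝ, ∀ x ∈ Ω, ‖u ℓ x‖ ≤ C)
    (hmono : JointlyNMonotone N Ω u) :
    ∃ H : (Fin N → Ed d) → ℝ,
      -- `H` is continuous on `Ω^N`
      ContinuousOn H {y : Fin N → Ed d | ∀ i, y i ∈ Ω} ∧
      -- `H` is `N`-antisymmetric on `Ω^N`
      NAntisymmetric N Ω H ∧
      -- `L_H(x, u₁(x),…,u_{N-1}(x)) = ∑_{i=1}^{N-1} ⟨uᵢ(x), x⟩` for all `x ∈ Ω`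
      (∀ x ∈ Ω, legendreL N Ω H x (fun ℓ => u ℓ x) = ∑ ℓ ∈ Icc 1 (N - 1), ⟪u ℓ x, x⟫) := by
  obtain ⟨C, hC0, hC⟩ := exists_nonneg_forall_le_of_forall_exists_le hubdd
  exact ⟨antisymmetrize (supPenalizedPairing u C Ω),
    (continuous_supPenalizedPairing hC hC0 hΩne).antisymmetrize.continuousOn,
    nAntisymmetric_antisymmetrize Ω _,
    fun x hx => hmono.legendreL_antisymmetrize_supPenalizedPairing hC hC0 hx⟩

theorem statement2 {d : ℕ} (N : ℕ) [NeZero N] (hN : 2 ≤ N)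
    (Ω : Set (Ed d)) (hΩopen : IsOpen Ω) (hΩconv : Convex ℝ Ω)
    (hΩbdd : Bornology.IsBounded Ω) (hΩne : Ω.Nonempty)
    (u : ℕ → Ed d → Ed d)
    (hubdd : ∀ ℓ ∈ Icc 1 (N - 1), ∃ C : ℝ, ∀ x ∈ Ω, ‖u ℓ x‖ ≤ C)
    (hmono : JointlyNMonotone N Ω u) :
    ∃ H : (Fin N → Ed d) → ℝ,
      -- `H` is continuous on `Ω^N`
      ContinuousOn H {y : Fin N → Ed d | ∀ i, y i ∈ Ω} ∧
      -- `H` is `N`-antisymmetric on `Ω^N`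
      NAntisymmetric N Ω H ∧
      -- `L_H(x, u₁(x),…,u_{N-1}(x)) = ∑_{i=1}^{N-1} ⟨uᵢ(x), x⟩` for all `x ∈ Ω`
      (∀ x ∈ Ω, legendreL N Ω H x (fun ℓ => u ℓ x) = ∑ ℓ ∈ Icc 1 (N - 1), ⟪u ℓ x, x⟫) :=
  statement2_general N Ω hΩne u hubdd hmono
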